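/- arXiv:1601.08126 — 2 statements merged into one kernel-verified Lean document; each statement's English description precedes it below -/
import Mathlib

section
/- Let k be a field of characteristic ≠ 2, 3 containing no primitive third root of unity (i.e. a^3 = 1 implies a = 1 for a ∈ k). Then the algebra k[X]/(X^3) has no automorphism of order exactly 3. -/
open Polynomial

section Aux

variable {k : Type*} [Field k]

lemma aux_root_cube : (AdjoinRoot.root (X ^ 3 : k[X])) ^ 3 = 0 := by
  rw [← AdjoinRoot.mk_X, ← map_pow, AdjoinRoot.mk_self]

lemma aux_uniq (c0 c1 c2 : k)
    (h : algebraMap k (AdjoinRoot (X ^ 3 : k[X])) c0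
      + algebraMap k (AdjoinRoot (X ^ 3 : k[X])) c1 * AdjoinRoot.root (X ^ 3 : k[X])
      + algebraMap k (AdjoinRoot (X ^ 3 : k[X])) c2 * AdjoinRoot.root (X ^ 3 : k[X]) ^ 2 = 0) :
    c0 = 0 ∧ c1 = 0 ∧ c2 = 0 := by
  set p : k[X] := C c0 + C c1 * X + C c2 * X ^ 2 with hp
  have hmk : AdjoinRoot.mk (X ^ 3 : k[X]) p = 0 := by
    rw [hp]
    simpa [map_add, map_mul, map_pow, AdjoinRoot.mk_X] using h
  have hdvd : (X ^ 3 : k[X]) ∣ p := (AdjoinRoot.mk_eq_zero).mp hmk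
  have hp0 : p = 0 := by
    by_contra hne
    have hdeg : (X ^ 3 : k[X]).natDegree ≤ p.natDegree :=
      Polynomial.natDegree_le_of_dvd hdvd hne
    have hdeg2 : p.natDegree ≤ 2 := by
      rw [hp]; compute_degree
    simp [natDegree_X_pow] at hdeg
    omega
  refine ⟨?_, ?_, ?_⟩
  · have := congrArg (fun q => Polynomial.coeff q 0) hp0
    simpa [hp, coeff_add, coeff_C, coeff_X_pow] using this
  · have := congrArg (fun q => Polynomial.coeff q 1) hp0
    simpa [hp, coeff_add, coeff_C, coeff_X_pow] using this
  · have := congrArg (fun q => Polynomial.coeff q 2) hp0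
    simpa [hp, coeff_add, coeff_C, coeff_X_pow] using this

lemma aux_exist (x : AdjoinRoot (X ^ 3 : k[X])) :
    ∃ c0 c1 c2 : k, x = algebraMap k (AdjoinRoot (X ^ 3 : k[X])) c0
      + algebraMap k (AdjoinRoot (X ^ 3 : k[X])) c1 * AdjoinRoot.root (X ^ 3 : k[X])
      + algebraMap k (AdjoinRoot (X ^ 3 : k[X])) c2 * AdjoinRoot.root (X ^ 3 : k[X]) ^ 2 := by
  obtain ⟨p, rfl⟩ := AdjoinRoot.mk_surjective x
  induction p using Polynomial.induction_on' with
  | add p q hp hq =>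
      obtain ⟨a0, a1, a2, ha⟩ := hp
      obtain ⟨b0, b1, b2, hb⟩ := hq
      refine ⟨a0 + b0, a1 + b1, a2 + b2, ?_⟩
      rw [map_add, ha, hb]
      simp only [map_add]
      ring
  | monomial n a =>
      have hmon : AdjoinRoot.mk (X ^ 3 : k[X]) (monomial n a)
          = algebraMap k (AdjoinRoot (X ^ 3 : k[X])) a * AdjoinRoot.root (X ^ 3 : k[X]) ^ n := by
        rw [← Polynomial.C_mul_X_pow_eq_monomial, map_mul, map_pow, AdjoinRoot.mk_X,
          AdjoinRoot.mk_C, AdjoinRoot.algebraMap_eq]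
      by_cases hn : n < 3
      · interval_cases n
        · exact ⟨a, 0, 0, by simp [hmon]⟩
        · exact ⟨0, a, 0, by simp [hmon]⟩
        · exact ⟨0, 0, a, by simp [hmon]⟩
      · refine ⟨0, 0, 0, ?_⟩
        have : AdjoinRoot.root (X ^ 3 : k[X]) ^ n = 0 := by
          have : n = 3 + (n - 3) := by omega
          rw [this, pow_add, aux_root_cube, zero_mul]
        simp [hmon, this]

end Aux

theorem auto_X3_no_order_three {k : Type*} [Field k]
    (h2 : (2 : k) ≠ 0) (h3 : (3 : k) ≠ 0)
    (hroot : ∀ a : k, a ^ 3 = 1 → a = 1) :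
    ¬ ∃ φ : AdjoinRoot (X ^ 3 : k[X]) ≃ₐ[k] AdjoinRoot (X ^ 3 : k[X]),
        orderOf φ = 3 := by
  rintro ⟨φ, hφ⟩
  set t : AdjoinRoot (X ^ 3 : k[X]) := AdjoinRoot.root _ with ht
  have ht3 : t ^ 3 = 0 := aux_root_cube
  obtain ⟨a, b, c, hφt⟩ := aux_exist (φ t)
  set σ : k →+* AdjoinRoot (X ^ 3 : k[X]) := algebraMap k _ with hσ
  rw [← ht] at hφt
  have hcb : φ (σ b) = σ b := φ.commutes b
  have hcc : φ (σ c) = σ c := φ.commutes c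
  -- step 1 : a = 0
  have hcube : (σ a + σ b * t + σ c * t ^ 2) ^ 3 = 0 := by
    rw [← hφt, ← map_pow, ht3, map_zero]
  have h0 : σ (a ^ 3) + σ (3 * a ^ 2 * b) * t + σ (3 * a ^ 2 * c + 3 * a * b ^ 2) * t ^ 2 = 0 := by
    simp only [map_add, map_mul, map_pow, map_ofNat]
    linear_combination hcube - (6 * σ a * σ b * σ c + σ b ^ 3
      + (3 * σ a * σ c ^ 2 + 3 * σ b ^ 2 * σ c) * t + 3 * σ b * σ c ^ 2 * t ^ 2
      + σ c ^ 3 * t ^ 3) * ht3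
  have ha : a = 0 := by
    have := (aux_uniq _ _ _ h0).1
    exact pow_eq_zero_iff (n := 3) (by norm_num) |>.mp this
  subst ha
  rw [map_zero, zero_add] at hφt
  -- compute φ (φ t)
  have h2t : φ (φ t) = σ (b ^ 2) * t + σ (b * c + b ^ 2 * c) * t ^ 2 := by
    rw [hφt]
    simp only [map_add, map_mul, map_pow, hcb, hcc]
    rw [hφt]
    linear_combination (2 * σ b * σ c ^ 2 + σ c ^ 3 * t) * ht3
  have h3t : φ (φ (φ t)) = σ (b ^ 3) * t
      + σ (b ^ 2 * c + b ^ 3 * c + b ^ 4 * c) * t ^ 2 := by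
    rw [h2t]
    simp only [map_add, map_mul, map_pow, hcb, hcc]
    rw [hφt]
    linear_combination (2 * σ b ^ 2 * σ c ^ 2 + 2 * σ b ^ 3 * σ c ^ 2
      + (σ b * σ c ^ 3 + σ b ^ 2 * σ c ^ 3) * t) * ht3
  have hpow : φ ^ 3 = 1 := by
    have h := pow_orderOf_eq_one φ
    rw [hφ] at h
    exact h
  have h3t' : φ (φ (φ t)) = t := by
    have : (φ ^ 3) t = (1 : AdjoinRoot (X ^ 3 : k[X]) ≃ₐ[k] AdjoinRoot (X ^ 3 : k[X])) t := by
      rw [hpow]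
    simpa [pow_succ, AlgEquiv.mul_apply, AlgEquiv.one_apply] using this
  have heq : σ 0 + σ (b ^ 3 - 1) * t + σ (b ^ 2 * c + b ^ 3 * c + b ^ 4 * c) * t ^ 2 = 0 := by
    have := h3t.symm.trans h3t'
    simp only [map_sub, map_one, map_zero]
    linear_combination this
  obtain ⟨-, hb1, hc1⟩ := aux_uniq _ _ _ heq
  have hb : b = 1 := hroot b (sub_eq_zero.mp hb1)
  have hc : c = 0 := by
    rw [hb] at hc1
    have : (3 : k) * c = 0 := by linear_combination hc1
    rcases mul_eq_zero.mp this with h | h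
    · exact absurd h h3
    · exact h
  have hφt' : φ t = t := by
    rw [hφt, hb, hc]
    simp
  have hφ1 : φ = 1 := by
    refine AlgEquiv.ext fun x => ?_
    obtain ⟨c0, c1, c2, rfl⟩ := aux_exist x
    simp [map_add, map_mul, map_pow, ← AdjoinRoot.algebraMap_eq, AlgEquiv.commutes, hφt', ← ht]
  rw [hφ1, orderOf_one] at hφ
  omega
end

section
/- Let k be a field. For every a ∈ k*, the map X ↦ aX + (1-a)X^2 defines a k-algebra automorphism of k[X]/(X^3 - X^2), and every unital k-algebra automorphism of k[X]/(X^3 - X^2) is of this form; hence Aut(k[X]/(X^3 - X^2)) ≅ k*. -/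
open Polynomial

section Aux
variable {k : Type*} [Field k]

private noncomputable abbrev zz (k : Type*) [Field k] :=
  algebraMap k (AdjoinRoot (X ^ 3 - X ^ 2 : k[X]))

private noncomputable abbrev tt (k : Type*) [Field k] :=
  AdjoinRoot.root (X ^ 3 - X ^ 2 : k[X])

lemma f_monic : (X ^ 3 - X ^ 2 : k[X]).Monic := by
  have : (X ^ 3 - X ^ 2 : k[X]) = X ^ 2 * (X - 1) := by ring
  rw [this]; exact (monic_X_pow 2).mul (monic_X_sub_C 1)

lemma f_natDegree : (X ^ 3 - X ^ 2 : k[X]).natDegree = 3 := by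
  compute_degree!

lemma expand2 (p : k[X]) (h : p.natDegree ≤ 2) :
    p = C (p.coeff 0) + C (p.coeff 1) * X + C (p.coeff 2) * X ^ 2 := by
  ext n
  match n with
  | 0 => simp
  | 1 => simp [coeff_X, coeff_C]
  | 2 => simp [coeff_X, coeff_C, coeff_X_pow]
  | (n+3) =>
    rw [Polynomial.coeff_eq_zero_of_natDegree_lt (by omega)]
    simp [coeff_X, coeff_C, coeff_X_pow]

lemma mk_inj {p q : k[X]} (hp : p.natDegree ≤ 2) (hq : q.natDegree ≤ 2)
    (h : AdjoinRoot.mk (X ^ 3 - X ^ 2 : k[X]) p = AdjoinRoot.mk (X ^ 3 - X ^ 2) q) :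
    p = q := by
  rw [AdjoinRoot.mk_eq_mk] at h
  by_contra hne
  have h1 : p - q ≠ 0 := sub_ne_zero.mpr hne
  have h2 := Polynomial.natDegree_le_of_dvd h h1
  have h3 : (p - q).natDegree ≤ 2 := (natDegree_sub_le p q).trans (by omega)
  rw [f_natDegree] at h2
  omega

lemma root_cube : (tt k) ^ 3 = (tt k) ^ 2 := by
  have := AdjoinRoot.mk_self (f := (X ^ 3 - X ^ 2 : k[X]))
  rw [map_sub, map_pow, map_pow, AdjoinRoot.mk_X, sub_eq_zero] at this
  exact this

lemma root_pow4 : (tt k) ^ 4 = (tt k) ^ 2 := by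
  linear_combination (tt k + 1) * root_cube (k := k)

lemma root_pow5 : (tt k) ^ 5 = (tt k) ^ 2 := by
  linear_combination ((tt k) ^ 2 + tt k + 1) * root_cube (k := k)

lemma root_pow6 : (tt k) ^ 6 = (tt k) ^ 2 := by
  linear_combination ((tt k) ^ 3 + (tt k) ^ 2 + tt k + 1) * root_cube (k := k)

lemma mk_expand (a b c : k) :
    AdjoinRoot.mk (X ^ 3 - X ^ 2 : k[X]) (C a + C b * X + C c * X ^ 2)
      = zz k a + zz k b * tt k + zz k c * (tt k) ^ 2 := by
  simp [AdjoinRoot.algebraMap_eq]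

lemma mk_u (a : k) : AdjoinRoot.mk (X ^ 3 - X ^ 2 : k[X]) (C a * X + C (1 - a) * X ^ 2)
    = zz k a * tt k + (1 - zz k a) * (tt k) ^ 2 := by
  simp [map_sub, AdjoinRoot.algebraMap_eq]

lemma sq_u (a : k) : (zz k a * tt k + (1 - zz k a) * (tt k) ^ 2) ^ 2 = (tt k) ^ 2 := by
  linear_combination (2 * zz k a * (1 - zz k a)) * root_cube (k := k)
    + (1 - zz k a) ^ 2 * root_pow4 (k := k)

lemma cube_u (a : k) : (zz k a * tt k + (1 - zz k a) * (tt k) ^ 2) ^ 3 = (tt k) ^ 2 := by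
  linear_combination (zz k a * tt k + (1 - zz k a) * (tt k) ^ 2) * sq_u a
    + zz k a * root_cube (k := k) + (1 - zz k a) * root_pow4 (k := k)

noncomputable def uHom (a : k) : AdjoinRoot (X ^ 3 - X ^ 2 : k[X]) →ₐ[k]
    AdjoinRoot (X ^ 3 - X ^ 2 : k[X]) :=
  AdjoinRoot.liftAlgHom _ (Algebra.ofId k _) (AdjoinRoot.mk (X ^ 3 - X ^ 2 : k[X]) (C a * X + C (1 - a) * X ^ 2)) (by
    show aeval _ _ = 0
    rw [map_sub, map_pow, map_pow, aeval_X, mk_u a, cube_u, sq_u, sub_self])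

lemma uHom_root (a : k) : uHom a (tt k)
    = AdjoinRoot.mk (X ^ 3 - X ^ 2 : k[X]) (C a * X + C (1 - a) * X ^ 2) := by
  unfold uHom; apply AdjoinRoot.liftAlgHom_root

lemma uHom_comp (a b : k) : (uHom a).comp (uHom b) = uHom (a * b) := by
  apply AdjoinRoot.algHom_ext
  show (uHom a) ((uHom b) (tt k)) = _
  rw [uHom_root b, mk_u b, uHom_root (a*b), mk_u (a*b)]
  simp only [map_add, map_mul, map_pow, map_sub, map_one, AlgHom.commutes]
  rw [uHom_root a, mk_u a]
  linear_combination (1 - zz k b) * sq_u a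

lemma uHom_one : uHom (1 : k) = AlgHom.id k _ := by
  apply AdjoinRoot.algHom_ext
  show uHom 1 (tt k) = tt k
  rw [uHom_root, mk_u]
  simp

noncomputable def uEquiv (a : kˣ) : AdjoinRoot (X ^ 3 - X ^ 2 : k[X]) ≃ₐ[k]
    AdjoinRoot (X ^ 3 - X ^ 2 : k[X]) :=
  AlgEquiv.ofAlgHom (uHom (a : k)) (uHom ((a⁻¹ : kˣ) : k))
    (by rw [uHom_comp, Units.mul_inv, uHom_one])
    (by rw [uHom_comp, Units.inv_mul, uHom_one])

lemma uEquiv_root (a : kˣ) : uEquiv a (tt k)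
    = AdjoinRoot.mk (X ^ 3 - X ^ 2 : k[X]) (C (a : k) * X + C (1 - (a : k)) * X ^ 2) :=
  uHom_root _

lemma aut_eq_of_root {φ ψ : AdjoinRoot (X ^ 3 - X ^ 2 : k[X]) ≃ₐ[k]
    AdjoinRoot (X ^ 3 - X ^ 2 : k[X])} (h : φ (tt k) = ψ (tt k)) : φ = ψ := by
  have h2 : φ.toAlgHom = ψ.toAlgHom := AdjoinRoot.algHom_ext h
  exact AlgEquiv.ext fun x => DFunLike.congr_fun h2 x

lemma no_c1_zero (φ : AdjoinRoot (X ^ 3 - X ^ 2 : k[X]) ≃ₐ[k]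
    AdjoinRoot (X ^ 3 - X ^ 2 : k[X])) (α β : k)
    (h : φ (tt k) = zz k α + zz k β * (tt k) ^ 2) : False := by
  set Q : k := 2 * α * β + β ^ 2 with hQ
  have h2 : φ ((tt k) ^ 2) = zz k (α ^ 2) + zz k Q * (tt k) ^ 2 := by
    rw [map_pow, h, hQ]
    simp only [map_add, map_mul, map_pow, map_ofNat]
    linear_combination (zz k β) ^ 2 * root_pow4 (k := k)
  have hxy : φ (zz k β * (tt k) ^ 2 - zz k Q * tt k)
      = φ (zz k (α ^ 2 * β - Q * α)) := by
    rw [map_sub, map_mul, map_mul, AlgEquiv.commutes, AlgEquiv.commutes, AlgEquiv.commutes,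
      h2, h, hQ]
    simp only [map_add, map_mul, map_pow, map_sub, map_ofNat]
    ring
  have hx := φ.injective hxy
  simp only [map_sub, map_mul, map_pow] at hx
  have hmk : AdjoinRoot.mk (X ^ 3 - X ^ 2 : k[X])
      (C (-(α ^ 2 * β - Q * α)) + C (-Q) * X + C β * X ^ 2) = AdjoinRoot.mk (X ^ 3 - X ^ 2) 0 := by
    rw [mk_expand, map_zero]
    simp only [map_neg, map_sub, map_mul, map_pow]
    linear_combination hx
  have hpoly := mk_inj (by compute_degree) (by simp) hmk
  have hβ : β = 0 := by
    have h5 := congrArg (fun p => Polynomial.coeff p 2) hpoly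
    simp only [coeff_add, coeff_C_mul, coeff_C, coeff_X, coeff_X_pow, coeff_zero] at h5
    simpa using h5
  subst hβ
  have ht : φ (tt k) = φ (zz k α) := by
    rw [h, AlgEquiv.commutes]; simp
  have ht2 := φ.injective ht
  have hmk2 : AdjoinRoot.mk (X ^ 3 - X ^ 2 : k[X]) X = AdjoinRoot.mk (X ^ 3 - X ^ 2) (C α) := by
    rw [AdjoinRoot.mk_X, AdjoinRoot.mk_C, ← AdjoinRoot.algebraMap_eq]
    exact ht2
  have hpoly2 := mk_inj (by simp) (by simp) hmk2
  have := congrArg (fun p => Polynomial.coeff p 1) hpoly2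
  simp [coeff_C] at this

lemma modByMonic_deg (r : k[X]) : (r %ₘ (X ^ 3 - X ^ 2)).natDegree ≤ 2 := by
  have h := degree_modByMonic_lt r (f_monic (k := k))
  rcases eq_or_ne (r %ₘ (X ^ 3 - X ^ 2)) 0 with h0 | h0
  · simp [h0]
  · have hd : (X ^ 3 - X ^ 2 : k[X]).degree = 3 := by
      rw [degree_eq_natDegree (f_monic (k := k)).ne_zero]
      norm_cast
      compute_degree!
    rw [hd] at h
    have h9 := (natDegree_lt_iff_degree_lt h0).mpr h
    have : (r %ₘ (X ^ 3 - X ^ 2)).natDegree < 3 := by exact_mod_cast h9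
    omega

lemma poly_coeffs {a0 a1 a2 b0 b1 b2 : k}
    (h : C a0 + C a1 * X + C a2 * X ^ 2 = C b0 + C b1 * X + C b2 * X ^ 2) :
    a0 = b0 ∧ a1 = b1 ∧ a2 = b2 := by
  refine ⟨?_, ?_, ?_⟩
  · have h0 := congrArg (fun p => Polynomial.coeff p 0) h
    norm_num [coeff_add, coeff_C_mul, coeff_C, coeff_X_zero, coeff_X_pow, coeff_X] at h0
    exact h0
  · have h1 := congrArg (fun p => Polynomial.coeff p 1) h
    norm_num [coeff_add, coeff_C_mul, coeff_C, coeff_X_pow, coeff_X] at h1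
    exact h1
  · have h2 := congrArg (fun p => Polynomial.coeff p 2) h
    norm_num [coeff_add, coeff_C_mul, coeff_C, coeff_X_pow, coeff_X] at h2
    exact h2

lemma classify (φ : AdjoinRoot (X ^ 3 - X ^ 2 : k[X]) ≃ₐ[k] AdjoinRoot (X ^ 3 - X ^ 2 : k[X])) :
    ∃ a : kˣ, φ (tt k) = AdjoinRoot.mk (X ^ 3 - X ^ 2 : k[X])
      (C (a : k) * X + C (1 - (a : k)) * X ^ 2) := by
  obtain ⟨r, hr⟩ := AdjoinRoot.mk_surjective (φ (tt k))
  obtain ⟨c0, c1, c2, hsc⟩ : ∃ c0 c1 c2, r %ₘ (X ^ 3 - X ^ 2)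
      = C c0 + C c1 * X + C c2 * X ^ 2 := ⟨_, _, _, expand2 _ (modByMonic_deg r)⟩
  have hmm : AdjoinRoot.mk (X ^ 3 - X ^ 2 : k[X]) (r %ₘ (X ^ 3 - X ^ 2))
      = AdjoinRoot.mk _ r := by
    rw [AdjoinRoot.mk_eq_mk, modByMonic_eq_sub_mul_div r (X ^ 3 - X ^ 2)]
    exact ⟨-(r /ₘ (X ^ 3 - X ^ 2)), by ring⟩
  have hy : φ (tt k) = zz k c0 + zz k c1 * tt k + zz k c2 * (tt k) ^ 2 := by
    rw [← hr, ← hmm, hsc, mk_expand]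
  have h32 : (φ (tt k)) ^ 3 = (φ (tt k)) ^ 2 := by
    rw [← map_pow, ← map_pow, root_cube]
  have hP2 : AdjoinRoot.mk (X ^ 3 - X ^ 2 : k[X])
      (C (c0 ^ 2) + C (2 * c0 * c1) * X
        + C (c1 ^ 2 + c2 ^ 2 + 2 * c0 * c2 + 2 * c1 * c2) * X ^ 2)
      = (φ (tt k)) ^ 2 := by
    rw [mk_expand, hy]
    simp only [map_add, map_mul, map_pow, map_ofNat]
    linear_combination (-(2 * zz k c1 * zz k c2)) * root_cube (k := k)
      - (zz k c2) ^ 2 * root_pow4 (k := k)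
  have hP3 : AdjoinRoot.mk (X ^ 3 - X ^ 2 : k[X])
      (C (c0 ^ 3) + C (3 * c0 ^ 2 * c1) * X
        + C (3*c0*c1^2 + 3*c0*c2^2 + 3*c0^2*c2 + 6*c0*c1*c2 + c1^3 + 3*c1*c2^2
              + 3*c1^2*c2 + c2^3) * X ^ 2)
      = (φ (tt k)) ^ 3 := by
    rw [mk_expand, hy]
    simp only [map_add, map_mul, map_pow, map_ofNat]
    linear_combination (-((zz k c1) ^ 3 + 6 * zz k c0 * zz k c1 * zz k c2)) * root_cube (k := k)
      - (3 * (zz k c1) ^ 2 * zz k c2 + 3 * zz k c0 * (zz k c2) ^ 2) * root_pow4 (k := k)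
      - (3 * zz k c1 * (zz k c2) ^ 2) * root_pow5 (k := k)
      - (zz k c2) ^ 3 * root_pow6 (k := k)
  have hPP := mk_inj (by compute_degree) (by compute_degree)
    (hP3.trans (h32.trans hP2.symm))
  obtain ⟨E0, E1, E2⟩ := poly_coeffs hPP
  have hc0 : c0 = 0 ∨ c0 = 1 := by
    have hz : c0 ^ 2 * (c0 - 1) = 0 := by linear_combination E0
    rcases mul_eq_zero.mp hz with h | h
    · exact Or.inl (by exact pow_eq_zero_iff two_ne_zero |>.mp h)
    · exact Or.inr (by linear_combination h)
  rcases hc0 with hc0 | hc0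
  · subst hc0
    have hS : (c1 + c2) ^ 3 = (c1 + c2) ^ 2 := by linear_combination E2
    have hSz : (c1 + c2) ^ 2 * ((c1 + c2) - 1) = 0 := by linear_combination hS
    rcases mul_eq_zero.mp hSz with h | h
    · exfalso
      have hS0 : c1 + c2 = 0 := pow_eq_zero_iff two_ne_zero |>.mp h
      have hz : zz k c1 + zz k c2 = 0 := by rw [← map_add, hS0, map_zero]
      have h0 : φ ((tt k) ^ 2) = 0 := by
        rw [map_pow, hy, map_zero]
        linear_combination (2 * zz k c1 * zz k c2) * root_cube (k := k)
          + (zz k c2) ^ 2 * root_pow4 (k := k)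
          + ((zz k c1 + zz k c2) * (tt k) ^ 2) * hz
      have ht2 : ((tt k) ^ 2 : AdjoinRoot (X ^ 3 - X ^ 2 : k[X])) = 0 :=
        φ.injective (h0.trans (map_zero φ).symm)
      have hmk0 : AdjoinRoot.mk (X ^ 3 - X ^ 2 : k[X]) (X ^ 2) = AdjoinRoot.mk _ 0 := by
        rw [map_zero, map_pow, AdjoinRoot.mk_X]
        exact ht2
      have hX2 := mk_inj (by compute_degree) (by simp) hmk0
      simpa [coeff_X_pow] using congrArg (fun p => Polynomial.coeff p 2) hX2
    · have hS1 : c1 + c2 = 1 := by linear_combination h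
      by_cases hc1 : c1 = 0
      · subst hc1
        exact absurd (by rw [hy]; simp : φ (tt k) = zz k 0 + zz k c2 * (tt k) ^ 2)
          (fun hh => no_c1_zero φ 0 c2 hh)
      · refine ⟨Units.mk0 c1 hc1, ?_⟩
        rw [mk_u, hy]
        have hc2 : c2 = 1 - c1 := by linear_combination hS1
        rw [hc2, map_sub, map_one]
        simp
  · subst hc0
    have hc1 : c1 = 0 := by linear_combination E1
    subst hc1
    exact absurd (by rw [hy]; simp : φ (tt k) = zz k 1 + zz k c2 * (tt k) ^ 2)
      (fun hh => no_c1_zero φ 1 c2 hh)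

end Aux

open Polynomial

theorem aut_X3_sub_X2 {k : Type*} [Field k] :
    (∀ a : kˣ, ∃ φ : AdjoinRoot (X ^ 3 - X ^ 2 : k[X]) ≃ₐ[k]
        AdjoinRoot (X ^ 3 - X ^ 2 : k[X]),
        φ (AdjoinRoot.root (X ^ 3 - X ^ 2)) =
          AdjoinRoot.mk (X ^ 3 - X ^ 2) (C (a : k) * X + C (1 - (a : k)) * X ^ 2)) ∧
    (∀ φ : AdjoinRoot (X ^ 3 - X ^ 2 : k[X]) ≃ₐ[k]
        AdjoinRoot (X ^ 3 - X ^ 2 : k[X]),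
        ∃ a : kˣ, φ (AdjoinRoot.root (X ^ 3 - X ^ 2)) =
          AdjoinRoot.mk (X ^ 3 - X ^ 2) (C (a : k) * X + C (1 - (a : k)) * X ^ 2)) ∧
    Nonempty ((AdjoinRoot (X ^ 3 - X ^ 2 : k[X]) ≃ₐ[k]
        AdjoinRoot (X ^ 3 - X ^ 2 : k[X])) ≃* kˣ) := by
  refine ⟨fun a => ⟨uEquiv a, uEquiv_root a⟩, fun φ => classify φ, ?_⟩
  let M : kˣ →* (AdjoinRoot (X ^ 3 - X ^ 2 : k[X]) ≃ₐ[k] AdjoinRoot (X ^ 3 - X ^ 2 : k[X])) :=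
    { toFun := uEquiv
      map_one' := by
        apply aut_eq_of_root
        rw [uEquiv_root, AlgEquiv.one_apply]
        simp [AdjoinRoot.algebraMap_eq]
      map_mul' := fun a b => by
        apply aut_eq_of_root
        rw [AlgEquiv.mul_apply]
        have h := DFunLike.congr_fun (uHom_comp (a : k) (b : k)) (tt k)
        simp only [AlgHom.comp_apply] at h
        show uHom ((↑(a * b)) : k) (tt k) = uHom (a : k) (uHom (b : k) (tt k))
        rw [Units.val_mul]
        exact h.symm }
  have hinj : Function.Injective M := by
    rw [injective_iff_map_eq_one]
    intro a ha
    have h1 : uEquiv a (tt k) = tt k := by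
      rw [show (uEquiv a : AdjoinRoot (X ^ 3 - X ^ 2 : k[X]) ≃ₐ[k] _) = M a from rfl, ha]
      rfl
    rw [uEquiv_root] at h1
    have h2 : AdjoinRoot.mk (X ^ 3 - X ^ 2 : k[X]) (C (a : k) * X + C (1 - (a : k)) * X ^ 2)
        = AdjoinRoot.mk _ X := by rw [AdjoinRoot.mk_X]; exact h1
    have h3 := mk_inj (by compute_degree) (by simp) h2
    have h4 := congrArg (fun p => Polynomial.coeff p 1) h3
    simp only [coeff_add, coeff_C_mul, coeff_C, coeff_X_pow, coeff_X] at h4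
    norm_num at h4
    exact h4
  have hsurj : Function.Surjective M := by
    intro φ
    obtain ⟨a, ha⟩ := classify φ
    exact ⟨a, aut_eq_of_root ((uEquiv_root a).trans ha.symm)⟩
  exact ⟨(MulEquiv.ofBijective M ⟨hinj, hsurj⟩).symm⟩
end
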